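/- arXiv:1108.5563 — 3 statements merged into one kernel-verified Lean document; each statement's English description precedes it below -/
import Mathlib

section
/- Let K be ℝ or ℂ and let g be a Lie algebra over K with g^{(N+1)} = {0} for some integer N ≥ 1. Then for every q ≥ 1 and any elements x_1, …, x_q ∈ g, the Lie subalgebra of g generated by {x_1, …, x_q} is finite-dimensional, with dimension at most ∑_{r=0}^{N-1} q^{r+1}. -/
/-!
The Lie subalgebra generated by `x₁, …, x_q` is spanned, as a module, by the left-normed
brackets `⁅…⁅x_i, x_{j₁}⁆, …, x_{j_r}⁆`: their span contains the generators, and it is closed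
under brackets because the Jacobi identity `⁅v, ⁅y, x_k⁆⁆ = ⁅⁅v, y⁆, x_k⁆ - ⁅⁅v, x_k⁆, y⁆` reduces
bracketing with a left-normed bracket to bracketing with shorter ones. A left-normed bracket
with `r` letters after its first one lies in `g^{(r+1)}`, so only those
with `r < N` survive, and there are `q^{r+1}` of them for each `r`.
-/

open LieModule Submodule

section LeftNormed

variable {R : Type*} [CommRing R] {L : Type*} [LieRing L] [LieAlgebra R L] {ι : Type*}
  (x : ι → L)

def leftNormedBracket (y : L) (w : List ι) : L :=
  w.foldl (fun a j => ⁅a, x j⁆) y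

@[simp]
lemma leftNormedBracket_nil (y : L) : leftNormedBracket x y [] = y := rfl

@[simp]
lemma leftNormedBracket_append_singleton (y : L) (w : List ι) (k : ι) :
    leftNormedBracket x y (w ++ [k]) = ⁅leftNormedBracket x y w, x k⁆ := by
  simp [leftNormedBracket]

lemma leftNormedBracket_mem_lowerCentralSeries {y : L} {n : ℕ}
    (hy : y ∈ lowerCentralSeries R L L n) (w : List ι) :
    leftNormedBracket x y w ∈ lowerCentralSeries R L L (n + w.length) := by
  induction w using List.reverseRecOn with
  | nil => simpa using hy
  | append_singleton w k ih =>
    rw [leftNormedBracket_append_singleton, List.length_append, List.length_singleton,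
      ← add_assoc, lowerCentralSeries_succ, ← lie_skew]
    exact neg_mem (LieSubmodule.lie_mem_lie (LieSubmodule.mem_top _) ih)

lemma leftNormedBracket_eq_zero {N : ℕ} (hN : lowerCentralSeries R L L N = ⊥) (i : ι)
    {w : List ι} (hw : N ≤ w.length) : leftNormedBracket x (x i) w = 0 := by
  have h := leftNormedBracket_mem_lowerCentralSeries x
    (by simp : x i ∈ lowerCentralSeries R L L 0) w
  rw [zero_add] at h
  simpa [hN] using antitone_lowerCentralSeries R L L hw h

variable (R) in
def leftNormedSpan : Submodule R L :=
  span R (Set.range fun p : ι × List ι => leftNormedBracket x (x p.1) p.2)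

lemma leftNormedBracket_mem_leftNormedSpan (i : ι) (w : List ι) :
    leftNormedBracket x (x i) w ∈ leftNormedSpan R x :=
  subset_span ⟨(i, w), rfl⟩

lemma lie_mem_leftNormedSpan_of_mem {v : L} (hv : v ∈ leftNormedSpan R x) (k : ι) :
    ⁅v, x k⁆ ∈ leftNormedSpan R x := by
  refine LinearMap.BilinMap.apply_apply_mem_of_mem_span _ _ {x k}
    (toEnd R L L : L →ₗ[R] Module.End R L) ?_ v (x k) hv (subset_span rfl)
  rintro _ ⟨⟨i, w⟩, rfl⟩ _ rfl
  simpa using leftNormedBracket_mem_leftNormedSpan x i (w ++ [k])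

lemma lie_leftNormedBracket_mem_leftNormedSpan {v : L} (hv : v ∈ leftNormedSpan R x) (j : ι)
    (w : List ι) : ⁅v, leftNormedBracket x (x j) w⁆ ∈ leftNormedSpan R x := by
  induction w using List.reverseRecOn generalizing v with
  | nil => exact lie_mem_leftNormedSpan_of_mem x hv j
  | append_singleton w k ih =>
    rw [leftNormedBracket_append_singleton, leibniz_lie, ← lie_skew _ ⁅v, x k⁆]
    exact add_mem (lie_mem_leftNormedSpan_of_mem x (ih hv) k)
      (neg_mem (ih (lie_mem_leftNormedSpan_of_mem x hv k)))

lemma lie_mem_leftNormedSpan {u v : L} (hu : u ∈ leftNormedSpan R x)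
    (hv : v ∈ leftNormedSpan R x) : ⁅u, v⁆ ∈ leftNormedSpan R x := by
  refine LinearMap.BilinMap.apply_apply_mem_of_mem_span _ _ _
    (toEnd R L L : L →ₗ[R] Module.End R L) ?_ u v hu hv
  rintro _ ⟨⟨i, w⟩, rfl⟩ _ ⟨⟨j, w'⟩, rfl⟩
  simpa using lie_leftNormedBracket_mem_leftNormedSpan x
    (leftNormedBracket_mem_leftNormedSpan x i w) j w'

lemma lieSpan_toSubmodule_eq_leftNormedSpan :
    (LieSubalgebra.lieSpan R L (Set.range x)).toSubmodule = leftNormedSpan R x := by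
  let V : LieSubalgebra R L :=
    { leftNormedSpan R x with lie_mem' := lie_mem_leftNormedSpan x }
  refine le_antisymm (LieSubalgebra.lieSpan_le (K := V) |>.mpr ?_) (span_le.mpr ?_)
  · rintro _ ⟨i, rfl⟩
    exact leftNormedBracket_mem_leftNormedSpan x i []
  · rintro _ ⟨⟨i, w⟩, rfl⟩
    dsimp only
    induction w using List.reverseRecOn with
    | nil => exact LieSubalgebra.subset_lieSpan ⟨i, rfl⟩
    | append_singleton w k ih =>
      rw [leftNormedBracket_append_singleton]
      exact LieSubalgebra.lie_mem _ ih (LieSubalgebra.subset_lieSpan ⟨k, rfl⟩)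

variable (N : ℕ) in
def shortLeftNormedBracket (p : ι × Σ l : Fin N, Fin l → ι) : L :=
  leftNormedBracket x (x p.1) (List.ofFn p.2.2)

lemma leftNormedSpan_eq_span_shortLeftNormedBracket {N : ℕ}
    (hN : lowerCentralSeries R L L N = ⊥) :
    leftNormedSpan R x = span R (Set.range (shortLeftNormedBracket x N)) := by
  refine le_antisymm (span_le.mpr ?_) (span_le.mpr ?_)
  · rintro _ ⟨⟨i, w⟩, rfl⟩
    by_cases hw : w.length < N
    · exact subset_span ⟨(i, ⟨⟨w.length, hw⟩, w.get⟩), by simp [shortLeftNormedBracket]⟩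
    · simp [leftNormedBracket_eq_zero x hN i (not_lt.mp hw)]
  · rintro _ ⟨p, rfl⟩
    exact leftNormedBracket_mem_leftNormedSpan x p.1 _

variable [Fintype ι] {N : ℕ}

lemma finite_lieSpan_of_lowerCentralSeries_eq_bot (hN : lowerCentralSeries R L L N = ⊥) :
    Module.Finite R (LieSubalgebra.lieSpan R L (Set.range x)) := by
  have h := Module.Finite.span_of_finite R (Set.finite_range (shortLeftNormedBracket x N))
  rwa [← leftNormedSpan_eq_span_shortLeftNormedBracket x hN,
    ← lieSpan_toSubmodule_eq_leftNormedSpan] at h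

lemma finrank_lieSpan_le_of_lowerCentralSeries_eq_bot [StrongRankCondition R]
    (hN : lowerCentralSeries R L L N = ⊥) :
    Module.finrank R (LieSubalgebra.lieSpan R L (Set.range x)) ≤
      ∑ r ∈ Finset.range N, Fintype.card ι ^ (r + 1) := by
  have h := finrank_range_le_card (R := R) (shortLeftNormedBracket x N)
  rw [Set.finrank, ← leftNormedSpan_eq_span_shortLeftNormedBracket x hN,
    ← lieSpan_toSubmodule_eq_leftNormedSpan] at h
  refine h.trans_eq ?_
  simp [Fintype.card_sigma, Fin.sum_univ_eq_sum_range, Finset.mul_sum, pow_succ']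

end LeftNormed

theorem finiteDimensional_lieSpan_of_nilpotent_general
    (K : Type) [RCLike K] (g : Type) [LieRing g] [LieAlgebra K g]
    (N : ℕ) (hnil : LieModule.lowerCentralSeries K g g N = ⊥)
    (q : ℕ) (x : Fin q → g) :
    FiniteDimensional K (LieSubalgebra.lieSpan K g (Set.range x)) ∧
      Module.finrank K (LieSubalgebra.lieSpan K g (Set.range x)) ≤
        ∑ r ∈ Finset.range N, q ^ (r + 1) := by
  refine ⟨finite_lieSpan_of_lowerCentralSeries_eq_bot x hnil, ?_⟩
  simpa using finrank_lieSpan_le_of_lowerCentralSeries_eq_bot x hnil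

/-- In an `(N+1)`-step nilpotent Lie algebra `g` over `K ∈ {ℝ, ℂ}`, the Lie subalgebra
generated by any `q ≥ 1` elements `x_1, …, x_q` is finite dimensional, of dimension at most
`∑_{r=0}^{N-1} q^(r+1)`.  The hypothesis `g^{(N+1)} = 0` is expressed as
`LieModule.lowerCentralSeries K g g N = ⊥` (Mathlib's series starts at index `0` with
`g^{(1)} = g`). -/
theorem finiteDimensional_lieSpan_of_nilpotent
    (K : Type) [RCLike K] (g : Type) [LieRing g] [LieAlgebra K g]
    (N : ℕ) (hN : 1 ≤ N) (hnil : LieModule.lowerCentralSeries K g g N = ⊥)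
    (q : ℕ) (hq : 1 ≤ q) (x : Fin q → g) :
    FiniteDimensional K (LieSubalgebra.lieSpan K g (Set.range x)) ∧
      Module.finrank K (LieSubalgebra.lieSpan K g (Set.range x)) ≤
        ∑ r ∈ Finset.range N, q ^ (r + 1) :=
  finiteDimensional_lieSpan_of_nilpotent_general K g N hnil q x
end

section
/- Let g be a Lie algebra over a field K with g^{(N+1)} = {0} for some integer N ≥ 1, and let S ⊆ g be any subset. Then the Lie subalgebra of g generated by S coincides, as a K-linear subspace, with the linear span of the set S ∪ { (ad v_r) ∘ ⋯ ∘ (ad v_1)(w) : v_1, …, v_r, w ∈ S, 1 ≤ r ≤ N−1 }. -/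
/-!
Let `P` be the span of all iterated brackets `(ad v_r) ∘ ⋯ ∘ (ad v_1) w` with `v_i, w ∈ S`, of
any length. It lies in the Lie subalgebra generated by `S` and is stable under `ad v` for
`v ∈ S`. The elements whose adjoint action stabilizes a subspace form a Lie subalgebra (Jacobi
identity), so all of `lieSpan S` stabilizes `P`; in particular `P` is closed under the bracket,
hence equals `lieSpan S`. Finally, a bracket with `r ≥ N` letters lies in `g^{(N+1)} = 0`.
-/

namespace Submodule

variable {R L M : Type*} [CommRing R] [LieRing L] [LieAlgebra R L]
  [AddCommGroup M] [Module R M] [LieRingModule L M] [LieModule R L M]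

def lieStabilizer (P : Submodule R M) : LieSubalgebra R L where
  carrier := {x | ∀ m ∈ P, ⁅x, m⁆ ∈ P}
  zero_mem' _ _ := by simp only [zero_lie, zero_mem]
  add_mem' hx hy m hm := by rw [add_lie]; exact add_mem (hx m hm) (hy m hm)
  smul_mem' r _ hx m hm := by rw [smul_lie]; exact smul_mem _ r (hx m hm)
  lie_mem' {x y} hx hy m hm := by
    rw [lie_lie]
    exact sub_mem (hx _ (hy m hm)) (hy _ (hx m hm))

theorem mem_lieStabilizer_span_iff {T : Set M} {x : L} :
    x ∈ (span R T).lieStabilizer ↔ ∀ m ∈ T, ⁅x, m⁆ ∈ span R T := by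
  refine ⟨fun hx m hm => hx m (subset_span hm), fun hx m hm => ?_⟩
  induction hm using span_induction with
  | mem m hm => exact hx m hm
  | zero => simp only [lie_zero, zero_mem]
  | add m m' _ _ ihm ihm' => rw [lie_add]; exact add_mem ihm ihm'
  | smul r m _ ihm => rw [lie_smul]; exact smul_mem _ r ihm

end Submodule

section LowerCentralSeries

variable {R L M : Type*} [CommRing R] [LieRing L] [LieAlgebra R L]
  [AddCommGroup M] [Module R M] [LieRingModule L M]

theorem foldr_lie_mem_lowerCentralSeries (l : List L) (m : M) :
    l.foldr (fun v acc => ⁅v, acc⁆) m ∈ LieModule.lowerCentralSeries R L M l.length := by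
  induction l with
  | nil => simp
  | cons v l ih =>
    rw [List.length_cons, LieModule.lowerCentralSeries_succ]
    exact LieSubmodule.lie_mem_lie (LieSubmodule.mem_top v) ih

theorem foldr_lie_eq_zero_of_lowerCentralSeries_eq_bot {N : ℕ}
    (h : LieModule.lowerCentralSeries R L M N = ⊥) {l : List L} (hl : N ≤ l.length) (m : M) :
    l.foldr (fun v acc => ⁅v, acc⁆) m = 0 := by
  have hmem := LieModule.antitone_lowerCentralSeries R L M hl
    (foldr_lie_mem_lowerCentralSeries l m)
  rwa [h, LieSubmodule.mem_bot] at hmem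

end LowerCentralSeries

namespace LieSubalgebra

variable {R L : Type*} [CommRing R] [LieRing L] [LieAlgebra R L]

def adIterates (S : Set L) : Set L :=
  {z | ∃ l : List L, (∀ v ∈ l, v ∈ S) ∧ ∃ w ∈ S, z = l.foldr (fun v acc => ⁅v, acc⁆) w}

variable {S : Set L}

theorem subset_adIterates : S ⊆ adIterates S :=
  fun w hw => ⟨[], by simp, w, hw, rfl⟩

theorem lie_mem_adIterates {v z : L} (hv : v ∈ S) (hz : z ∈ adIterates S) :
    ⁅v, z⁆ ∈ adIterates S := by
  obtain ⟨l, hl, w, hw, rfl⟩ := hz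
  exact ⟨v :: l, by simpa using ⟨hv, hl⟩, w, hw, rfl⟩

theorem adIterates_subset_lieSpan : adIterates S ⊆ lieSpan R L S := by
  rintro _ ⟨l, hl, w, hw, rfl⟩
  induction l with
  | nil => exact subset_lieSpan hw
  | cons v l ih =>
    rw [List.forall_mem_cons] at hl
    exact lie_mem _ (subset_lieSpan hl.1) (ih hl.2)

theorem lieSpan_le_lieStabilizer_span_adIterates :
    lieSpan R L S ≤ (Submodule.span R (adIterates S)).lieStabilizer :=
  lieSpan_le.mpr fun _ hv =>
    Submodule.mem_lieStabilizer_span_iff.mpr fun _ hz =>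
      Submodule.subset_span (lie_mem_adIterates hv hz)

theorem span_adIterates_eq_lieSpan :
    Submodule.span R (adIterates S) = (lieSpan R L S).toSubmodule := by
  set P := Submodule.span R (adIterates S)
  have hP : P ≤ (lieSpan R L S).toSubmodule :=
    Submodule.span_le.mpr adIterates_subset_lieSpan
  have lie_mem_P {x y : L} (hx : x ∈ P) (hy : y ∈ P) : ⁅x, y⁆ ∈ P :=
    lieSpan_le_lieStabilizer_span_adIterates (hP hx) y hy
  refine le_antisymm hP ?_
  change lieSpan R L S ≤ { P with lie_mem' := lie_mem_P }
  exact lieSpan_le.mpr fun _ hw => Submodule.subset_span (subset_adIterates hw)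

end LieSubalgebra

open LieSubalgebra in
/-- `(ad v_r) ∘ ⋯ ∘ (ad v_1) w` is encoded as `l.foldr (fun v acc => ⁅v, acc⁆) w` with
`l = [v_r, …, v_1]`, and `g^{(N+1)}` is `LieModule.lowerCentralSeries K g g N` (Mathlib's series
starts at index `0` with `g^{(1)} = g`). -/
theorem lieSpan_toSubmodule_eq_span_union_adIterates_of_nilpotent_general
    (K : Type*) [Field K] (g : Type*) [LieRing g] [LieAlgebra K g]
    (N : ℕ) (hnil : LieModule.lowerCentralSeries K g g N = ⊥)
    (S : Set g) :
    LieSubalgebra.toSubmodule (LieSubalgebra.lieSpan K g S) =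
      Submodule.span K (S ∪
        {z : g | ∃ l : List g, l ≠ [] ∧ l.length ≤ N - 1 ∧ (∀ v ∈ l, v ∈ S) ∧
          ∃ w ∈ S, z = l.foldr (fun v acc => ⁅v, acc⁆) w}) := by
  rw [← span_adIterates_eq_lieSpan]
  refine le_antisymm (Submodule.span_le.mpr ?_) (Submodule.span_mono ?_)
  · rintro _ ⟨l, hl, w, hw, rfl⟩
    rcases eq_or_ne l [] with rfl | hne
    · exact Submodule.subset_span (Or.inl hw)
    by_cases hlen : l.length ≤ N - 1
    · exact Submodule.subset_span (Or.inr ⟨l, hne, hlen, hl, w, hw, rfl⟩)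
    · rw [foldr_lie_eq_zero_of_lowerCentralSeries_eq_bot hnil (by omega)]
      exact zero_mem _
  · rintro _ (hz | ⟨l, -, -, hl, w, hw, rfl⟩)
    exacts [subset_adIterates hz, ⟨l, hl, w, hw, rfl⟩]

/-- In an `(N+1)`-step nilpotent Lie algebra `g` over a field `K`, the Lie subalgebra
generated by a subset `S` coincides, as a `K`-linear subspace, with the linear span of `S`
together with all the elements `(ad v_r) ∘ ⋯ ∘ (ad v_1) w` with `v_1, …, v_r, w ∈ S` and
`1 ≤ r ≤ N - 1`.  Such an iterated adjoint is encoded as `l.foldr (fun v acc => ⁅v, acc⁆) w`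
for a nonempty list `l = [v_r, …, v_1]` of elements of `S` with `l.length ≤ N - 1`.
The hypothesis `g^{(N+1)} = 0` is expressed as `LieModule.lowerCentralSeries K g g N = ⊥`
(Mathlib's series starts at index `0` with `g^{(1)} = g`). -/
theorem lieSpan_toSubmodule_eq_span_union_adIterates_of_nilpotent
    (K : Type*) [Field K] (g : Type*) [LieRing g] [LieAlgebra K g]
    (N : ℕ) (hN : 1 ≤ N) (hnil : LieModule.lowerCentralSeries K g g N = ⊥)
    (S : Set g) :
    LieSubalgebra.toSubmodule (LieSubalgebra.lieSpan K g S) =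
      Submodule.span K (S ∪
        {z : g | ∃ l : List g, l ≠ [] ∧ l.length ≤ N - 1 ∧ (∀ v ∈ l, v ∈ S) ∧
          ∃ w ∈ S, z = l.foldr (fun v acc => ⁅v, acc⁆) w}) :=
  lieSpan_toSubmodule_eq_span_union_adIterates_of_nilpotent_general K g N hnil S
end

section
/- Let V be a real Banach space, let A be a bounded linear operator on V, and let q ≥ 1 be an integer. Then A^q = 0 if and only if for every t ∈ ℝ the operator exp(tA) satisfies (exp(tA) − I)^q = 0; that is, A is nilpotent of index at most q if and only if A generates a one-parameter group of unipotent operators of unipotence index at most q. -/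
/-!
If `a ^ q = 0` the exponential series of `a` is a polynomial in `a` with constant term `1`, so
`exp a - 1 = a * s` with `s` commuting with `a`, and `(exp a - 1) ^ q = a ^ q * s ^ q = 0`.
Conversely `t⁻¹ • (exp (t • a) - 1) → a` as `t → 0`, so `a ^ q` is a limit of the powers
`t⁻ᵠ • (exp (t • a) - 1) ^ q`, which all vanish.
-/

open Filter Finset Topology
open scoped Nat

namespace NormedSpace

section Nilpotent

variable {𝔸 : Type*} [Ring 𝔸] [TopologicalSpace 𝔸] [IsTopologicalRing 𝔸]
  (𝕂 : Type*) [Field 𝕂] [CharZero 𝕂] [Algebra 𝕂 𝔸]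

theorem exp_eq_sum_range_of_pow_eq_zero {a : 𝔸} {k : ℕ} (h : a ^ k = 0) :
    exp a = ∑ n ∈ range k, (n !⁻¹ : 𝕂) • a ^ n := by
  rw [exp_eq_tsum 𝕂]
  refine tsum_eq_sum fun n hn => ?_
  rw [pow_eq_zero_of_le (by simpa using hn) h, smul_zero]

theorem exp_sub_one_eq_mul_sum_of_pow_eq_zero {a : 𝔸} {k : ℕ} (h : a ^ k = 0) :
    exp a - 1 = a * ∑ n ∈ range k, ((n + 1)!⁻¹ : 𝕂) • a ^ n := by
  rw [exp_eq_sum_range_of_pow_eq_zero 𝕂 (pow_eq_zero_of_le k.le_succ h), sum_range_succ',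
    mul_sum]
  simp [pow_succ']

end Nilpotent

theorem exp_sub_one_pow_eq_zero_of_pow_eq_zero {𝔸 : Type*} [Ring 𝔸] [TopologicalSpace 𝔸]
    [IsTopologicalRing 𝔸] (𝕂 : Type*) [Field 𝕂] [CharZero 𝕂] [Algebra 𝕂 𝔸]
    {a : 𝔸} {k : ℕ} (h : a ^ k = 0) : (exp a - 1) ^ k = 0 := by
  have hcomm : Commute a (∑ n ∈ range k, ((n + 1)!⁻¹ : 𝕂) • a ^ n) :=
    Commute.sum_right _ _ _ fun n _ => ((Commute.refl a).pow_right n).smul_right _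
  rw [exp_sub_one_eq_mul_sum_of_pow_eq_zero 𝕂 h, hcomm.mul_pow, h, zero_mul]

section Derivative

variable {𝕂 𝔸 : Type*} [RCLike 𝕂] [NormedRing 𝔸] [NormedAlgebra 𝕂 𝔸] [CompleteSpace 𝔸]

theorem tendsto_inv_smul_exp_smul_sub_one (a : 𝔸) :
    Tendsto (fun t : 𝕂 => t⁻¹ • (exp (t • a) - 1)) (𝓝[≠] 0) (𝓝 a) := by
  have hderiv : HasDerivAt (fun t : 𝕂 => exp (t • a)) a 0 := by
    simpa using hasDerivAt_exp_smul_const a (0 : 𝕂)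
  refine (hasDerivAt_iff_tendsto_slope.mp hderiv).congr fun t => ?_
  simp [slope_def_module, exp_zero]

theorem pow_eq_zero_of_eventually_exp_smul_sub_one_pow_eq_zero {a : 𝔸} {k : ℕ}
    (h : ∀ᶠ t : 𝕂 in 𝓝[≠] 0, (exp (t • a) - 1) ^ k = 0) : a ^ k = 0 := by
  have hpow := (tendsto_inv_smul_exp_smul_sub_one (𝕂 := 𝕂) a).pow k
  refine tendsto_nhds_unique hpow (tendsto_const_nhds.congr' ?_)
  filter_upwards [h] with t ht
  rw [smul_pow, ht, smul_zero]

end Derivative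

end NormedSpace

theorem nilpotent_iff_exp_unipotent_general
    (V : Type) [NormedAddCommGroup V] [NormedSpace ℝ V] [CompleteSpace V]
    (A : V →L[ℝ] V) (q : ℕ) :
    A ^ q = 0 ↔ ∀ t : ℝ, (NormedSpace.exp (t • A) - 1) ^ q = 0 := by
  constructor
  · intro hA t
    exact NormedSpace.exp_sub_one_pow_eq_zero_of_pow_eq_zero ℝ (by rw [smul_pow, hA, smul_zero])
  · intro h
    exact NormedSpace.pow_eq_zero_of_eventually_exp_smul_sub_one_pow_eq_zero (𝕂 := ℝ)
      (.of_forall h)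

/-- A bounded operator `A` on a real Banach space `V` is nilpotent of index at most `q ≥ 1`
if and only if it generates a one-parameter group of unipotent operators of unipotence index
at most `q`, i.e. `(exp(tA) - I)^q = 0` for every `t ∈ ℝ`. -/
theorem nilpotent_iff_exp_unipotent
    (V : Type) [NormedAddCommGroup V] [NormedSpace ℝ V] [CompleteSpace V]
    (A : V →L[ℝ] V) (q : ℕ) (hq : 1 ≤ q) :
    A ^ q = 0 ↔ ∀ t : ℝ, (NormedSpace.exp (t • A) - 1) ^ q = 0 :=
  nilpotent_iff_exp_unipotent_general V A q
end
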